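/- arXiv:1210.3658 — 4 statements merged into one kernel-verified Lean document; each statement's English description precedes it below -/
import Mathlib

section
/- In the max-plus setting over the reals, the minimum over all x ∈ ℝⁿ of max( maxᵢ(pᵢ - xᵢ), maxᵢ(xᵢ - qᵢ) ) equals Δ = (1/2)·maxᵢ(pᵢ - qᵢ), and it is attained exactly on the set of x with pᵢ - Δ ≤ xᵢ ≤ qᵢ + Δ for all i. -/
noncomputable def msup {n : ℕ} (hn : 0 < n) (f : Fin n → ℝ) : ℝ :=
  Finset.univ.sup' (Finset.univ_nonempty_iff.mpr (Fin.pos_iff_nonempty.mp hn)) f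

noncomputable def minf {n : ℕ} (hn : 0 < n) (f : Fin n → ℝ) : ℝ :=
  Finset.univ.inf' (Finset.univ_nonempty_iff.mpr (Fin.pos_iff_nonempty.mp hn)) f

noncomputable def mpMul {n : ℕ} (hn : 0 < n) (A B : Fin n → Fin n → ℝ) :
    Fin n → Fin n → ℝ :=
  fun i j => msup hn (fun k => A i k + B k j)

noncomputable def mpPow {n : ℕ} (hn : 0 < n) (A : Fin n → Fin n → ℝ) : ℕ → Fin n → Fin n → ℝ
  | 0 => A
  | 1 => A
  | (m + 2) => mpMul hn A (mpPow hn A (m + 1))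

lemma le_msup {n : ℕ} (hn : 0 < n) (f : Fin n → ℝ) (i : Fin n) : f i ≤ msup hn f :=
  Finset.le_sup' f (Finset.mem_univ i)

lemma msup_le {n : ℕ} (hn : 0 < n) (f : Fin n → ℝ) (a : ℝ) (h : ∀ i, f i ≤ a) :
    msup hn f ≤ a :=
  Finset.sup'_le _ f (fun i _ => h i)

lemma exists_msup {n : ℕ} (hn : 0 < n) (f : Fin n → ℝ) : ∃ i, msup hn f = f i := by
  obtain ⟨i, _, h⟩ := Finset.exists_mem_eq_sup' (Finset.univ_nonempty_iff.mpr (Fin.pos_iff_nonempty.mp hn)) f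
  exact ⟨i, h⟩

theorem stmt1 {n : ℕ} (hn : 0 < n) (p q : Fin n → ℝ) (Δ : ℝ)
    (hΔ : Δ = (1 / 2) * msup hn (fun i => p i - q i))
    (f : (Fin n → ℝ) → ℝ)
    (hf : ∀ x, f x = max (msup hn (fun i => p i - x i)) (msup hn (fun i => x i - q i))) :
    (∀ x : Fin n → ℝ, Δ ≤ f x) ∧
      (∀ x : Fin n → ℝ, f x = Δ ↔ ∀ i, p i - Δ ≤ x i ∧ x i ≤ q i + Δ) := by
  have key : ∀ x : (Fin n → ℝ), Δ ≤ f x := by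
    intro x
    obtain ⟨i, hi⟩ := exists_msup hn (fun i => p i - q i)
    have h1 : p i - x i ≤ f x := by
      rw [hf x]; exact le_trans (le_msup hn (fun j => p j - x j) i) (le_max_left _ _)
    have h2 : x i - q i ≤ f x := by
      rw [hf x]; exact le_trans (le_msup hn (fun j => x j - q j) i) (le_max_right _ _)
    have hi' : msup hn (fun i => p i - q i) = p i - q i := hi
    rw [hΔ, hi']; linarith
  refine ⟨key, fun x => ⟨fun hfx => ?_, fun h => ?_⟩⟩
  · intro i
    have h1 : p i - x i ≤ Δ := by
      rw [← hfx, hf x]; exact le_trans (le_msup hn (fun j => p j - x j) i) (le_max_left _ _)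
    have h2 : x i - q i ≤ Δ := by
      rw [← hfx, hf x]; exact le_trans (le_msup hn (fun j => x j - q j) i) (le_max_right _ _)
    constructor <;> linarith
  · have hle : f x ≤ Δ := by
      rw [hf x]
      apply max_le <;> apply msup_le <;> intro i <;> obtain ⟨ha, hb⟩ := h i <;> linarith
    exact le_antisymm hle (key x)
end

section
/- Eigenvalue lower bound for the max-plus Rayleigh quotient: if x₀ ∈ ℝⁿ is an eigenvector of A with eigenvalue λ (i.e., maxⱼ(aᵢⱼ + x₀ⱼ) = λ + x₀ᵢ for all i), then for every x ∈ ℝⁿ, maxᵢ,ⱼ(aᵢⱼ + xⱼ - xᵢ) ≥ λ. -/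
theorem stmt6 {n : ℕ} (hn : 0 < n) (A : Fin n → Fin n → ℝ) (lam : ℝ)
    (x₀ : Fin n → ℝ) (hx₀ : ∀ i, msup hn (fun j => A i j + x₀ j) = lam + x₀ i) :
    ∀ x : Fin n → ℝ,
      msup hn (fun i => msup hn (fun j => A i j + x j - x i)) ≥ lam := by
  intro x
  have hne : (Finset.univ : Finset (Fin n)).Nonempty :=
    Finset.univ_nonempty_iff.mpr (Fin.pos_iff_nonempty.mp hn)
  -- choose i minimizing x i - x₀ i
  obtain ⟨i, -, hi⟩ := Finset.exists_min_image Finset.univ (fun k => x k - x₀ k) hne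
  -- choose j attaining the sup in hx₀ i
  obtain ⟨j, -, hj⟩ := Finset.exists_mem_eq_sup' hne (fun j => A i j + x₀ j)
  have hAij : A i j + x₀ j = lam + x₀ i := by
    have := hx₀ i
    rw [msup] at this
    rw [← this, hj]
  have h1 : A i j + x j - x i ≥ lam := by
    have := hi j (Finset.mem_univ j)
    linarith
  have h2 : msup hn (fun j => A i j + x j - x i) ≥ A i j + x j - x i := by
    rw [msup]; exact Finset.le_sup' (fun j => A i j + x j - x i) (Finset.mem_univ j)
  have h3 : msup hn (fun i => msup hn (fun j => A i j + x j - x i))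
      ≥ msup hn (fun j => A i j + x j - x i) := by
    rw [msup]; exact Finset.le_sup' (fun i => msup hn fun j => A i j + x j - x i) (Finset.mem_univ i)
  linarith
end

section
/- Kleene star solves the inequality Ax ⊕ b ≤ x: if all max-plus powers of A up to order n have nonpositive diagonal cycle weights (i.e., (Aᵐ)ᵢᵢ ≤ 0 for 1 ≤ m ≤ n), then x = A*u satisfies Ax ≤ x in the max-plus sense for every u ∈ ℝⁿ, where A* = I ⊕ A ⊕ ⋯ ⊕ A^{n-1}. -/
noncomputable def bMul {n : ℕ} (A B : Fin n → Fin n → WithBot ℝ) :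
    Fin n → Fin n → WithBot ℝ :=
  fun i j => Finset.univ.sup fun k => A i k + B k j

def bId (n : ℕ) : Fin n → Fin n → WithBot ℝ := fun i j => if i = j then 0 else ⊥

noncomputable def bPow {n : ℕ} (A : Fin n → Fin n → WithBot ℝ) :
    ℕ → Fin n → Fin n → WithBot ℝ
  | 0 => bId n
  | m + 1 => bMul A (bPow A m)

noncomputable def bStar {n : ℕ} (A : Fin n → Fin n → WithBot ℝ) :
    Fin n → Fin n → WithBot ℝ :=
  fun i j => (Finset.range n).sup fun m => bPow A m i j

/-! `bPow A m i j` is the maximal weight of a walk of length `m` from `j` to `i`. A walk of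
length `m ≥ n` visits some vertex twice among its first `n + 1` vertices; the closed walk in between
has length at most `n`, hence weight `≤ 0`, and cutting it out leaves a shorter walk that is at least
as heavy. So every power `A^m` lies below `A*`; in particular `A A* ≤ A*`, and then `A (A* u) ≤ A* u`. -/

theorem WithBot.add_finset_sup {ι α : Type*} [AddCommMonoid α] [LinearOrder α] [IsOrderedAddMonoid α]
    (c : WithBot α) (s : Finset ι) (f : ι → WithBot α) :
    c + s.sup f = s.sup fun t => c + f t :=
  Finset.apply_sup_eq_sup_comp_of_linearOrder (c + ·) (fun _ _ h => add_le_add_right h c)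
    (WithBot.add_bot c)

/-- Weight of the walk `p a → p (a + 1) → ⋯ → p b`; the edge `j → i` carries `A i j`. -/
noncomputable def walkWeight {n : ℕ} (A : Fin n → Fin n → WithBot ℝ) (p : ℕ → Fin n) (a b : ℕ) :
    WithBot ℝ :=
  ∑ t ∈ Finset.Ico a b, A (p (t + 1)) (p t)

section
variable {n : ℕ} (A : Fin n → Fin n → WithBot ℝ)

theorem bPow_succ_apply (m : ℕ) (i j : Fin n) :
    bPow A (m + 1) i j = Finset.univ.sup fun k => A i k + bPow A m k j := rfl

theorem walkWeight_succ (p : ℕ → Fin n) {a b : ℕ} (hab : a ≤ b) :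
    walkWeight A p a (b + 1) = walkWeight A p a b + A (p (b + 1)) (p b) :=
  Finset.sum_Ico_succ_top hab _

theorem walkWeight_add (p : ℕ → Fin n) {a b c : ℕ} (hab : a ≤ b) (hbc : b ≤ c) :
    walkWeight A p a b + walkWeight A p b c = walkWeight A p a c :=
  Finset.sum_Ico_consecutive _ hab hbc

theorem walkWeight_le_bPow (p : ℕ → Fin n) (a m : ℕ) :
    walkWeight A p a (a + m) ≤ bPow A m (p (a + m)) (p a) := by
  induction m with
  | zero => simp [walkWeight, bPow, bId]
  | succ m ih =>
    rw [← add_assoc, walkWeight_succ A p (Nat.le_add_right a m), add_comm, bPow_succ_apply]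
    exact (add_le_add_right ih _).trans
      (Finset.le_sup (f := fun k => A (p (a + m + 1)) k + bPow A m k (p a)) (Finset.mem_univ _))

theorem exists_walkWeight_ge (m : ℕ) (i j : Fin n) :
    bPow A m i j = ⊥ ∨ ∃ p : ℕ → Fin n, p 0 = j ∧ p m = i ∧ bPow A m i j ≤ walkWeight A p 0 m := by
  induction m generalizing i with
  | zero =>
    by_cases hij : i = j
    · exact .inr ⟨fun _ => j, rfl, hij.symm, by simp [walkWeight, bPow, bId, hij]⟩
    · exact .inl (if_neg hij)
  | succ m ih =>
    obtain ⟨k, -, hk⟩ := Finset.exists_mem_eq_sup Finset.univ ⟨i, Finset.mem_univ i⟩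
      fun k => A i k + bPow A m k j
    rw [bPow_succ_apply, hk]
    rcases ih k with hbot | ⟨p, hp0, hpm, hp⟩
    · exact .inl (by rw [hbot, WithBot.add_bot])
    refine .inr ⟨Function.update p (m + 1) i, by simp [hp0], by simp, ?_⟩
    have hprefix : walkWeight A (Function.update p (m + 1) i) 0 m = walkWeight A p 0 m :=
      Finset.sum_congr rfl fun t ht => by
        have := (Finset.mem_Ico.mp ht).2
        rw [Function.update_of_ne (by omega), Function.update_of_ne (by omega)]
    rw [walkWeight_succ A _ (Nat.zero_le m), hprefix, Function.update_self,
      Function.update_of_ne (by omega), hpm, add_comm]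
    exact add_le_add_left hp _

theorem bPow_add_le (x y : ℕ) (i k j : Fin n) :
    bPow A x i k + bPow A y k j ≤ bPow A (x + y) i j := by
  induction x generalizing i with
  | zero =>
    by_cases hik : i = k <;> simp [bPow, bId, hik]
  | succ x ih =>
    rw [bPow_succ_apply, add_comm, WithBot.add_finset_sup, Nat.succ_add, bPow_succ_apply]
    refine Finset.sup_mono_fun fun l _ => ?_
    rw [add_left_comm, add_comm (bPow A y k j)]
    exact add_le_add_right (ih l) _

def CyclesNonpos : Prop :=
  ∀ m, 1 ≤ m → m ≤ n → ∀ i, bPow A m i i ≤ 0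

variable {A}

theorem exists_lt_walkWeight_le_bPow (hcyc : CyclesNonpos A)
    {m : ℕ} (hm : n ≤ m) (p : ℕ → Fin n) :
    ∃ m' < m, walkWeight A p 0 m ≤ bPow A m' (p m) (p 0) := by
  obtain ⟨x, y, hxy, hpxy⟩ := Fintype.exists_ne_map_eq_of_card_lt
    (fun t : Fin (n + 1) => p t) (by simp)
  obtain ⟨a, b, hab, hbn, hpab⟩ : ∃ a b : ℕ, a < b ∧ b ≤ n ∧ p a = p b := by
    rcases lt_or_gt_of_ne hxy with h | h
    · exact ⟨x, y, h, Nat.lt_succ_iff.mp y.isLt, hpxy⟩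
    · exact ⟨y, x, h, Nat.lt_succ_iff.mp x.isLt, hpxy.symm⟩
  have hcycle : walkWeight A p a b ≤ 0 := by
    obtain ⟨c, rfl⟩ := Nat.exists_eq_add_of_lt hab
    have := walkWeight_le_bPow A p a (c + 1)
    rw [← add_assoc, ← hpab] at this
    exact this.trans (hcyc (c + 1) (by omega) (by omega) (p a))
  have hhead := walkWeight_le_bPow A p 0 a
  have htail := walkWeight_le_bPow A p b (m - b)
  rw [zero_add] at hhead
  rw [Nat.add_sub_cancel' (by omega), ← hpab] at htail
  refine ⟨m - b + a, by omega, ?_⟩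
  calc walkWeight A p 0 m = walkWeight A p b m + walkWeight A p a b + walkWeight A p 0 a := by
        rw [← walkWeight_add A p (Nat.zero_le b) (by omega),
          ← walkWeight_add A p (Nat.zero_le a) hab.le]
        abel
    _ ≤ bPow A (m - b) (p m) (p a) + 0 + bPow A a (p a) (p 0) := by gcongr
    _ ≤ bPow A (m - b + a) (p m) (p 0) := by
        rw [add_zero]; exact bPow_add_le A _ _ _ _ _

theorem bPow_le_bStar (hcyc : CyclesNonpos A) (m : ℕ) (i j : Fin n) :
    bPow A m i j ≤ bStar A i j := by
  induction m using Nat.strong_induction_on with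
  | _ m ih =>
    by_cases hm : m < n
    · exact Finset.le_sup (f := fun m => bPow A m i j) (Finset.mem_range.mpr hm)
    rcases exists_walkWeight_ge A m i j with hbot | ⟨p, rfl, rfl, hp⟩
    · exact hbot ▸ bot_le
    obtain ⟨m', hm', hshort⟩ := exists_lt_walkWeight_le_bPow hcyc (not_lt.mp hm) p
    exact hp.trans (hshort.trans (ih m' hm'))

theorem add_bStar_le (hcyc : CyclesNonpos A) (i j k : Fin n) :
    A i j + bStar A j k ≤ bStar A i k := by
  rw [bStar, WithBot.add_finset_sup]
  refine Finset.sup_le fun m _ => ?_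
  calc A i j + bPow A m j k ≤ bPow A (m + 1) i k :=
        Finset.le_sup (f := fun l => A i l + bPow A m l k) (Finset.mem_univ j)
    _ ≤ bStar A i k := bPow_le_bStar hcyc _ _ _

end

theorem stmt11_general {n : ℕ} (A' : Fin n → Fin n → WithBot ℝ)
    (hTr : ∀ m, 1 ≤ m → m ≤ n → ∀ i, bPow A' m i i ≤ 0) :
    ∀ u : Fin n → ℝ,
      ∀ x : Fin n → WithBot ℝ,
        (∀ i, x i = Finset.univ.sup fun j => bStar A' i j + (u j : WithBot ℝ)) →
        ∀ i, (Finset.univ.sup fun j => A' i j + x j) ≤ x i := by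
  intro u x hx i
  refine Finset.sup_le fun j _ => ?_
  rw [hx j, hx i, WithBot.add_finset_sup]
  refine Finset.sup_mono_fun fun k _ => ?_
  rw [← add_assoc]
  exact add_le_add_left (add_bStar_le hTr i j k) _

theorem stmt11 {n : ℕ} (hn : 0 < n) (A : Fin n → Fin n → ℝ)
    (A' : Fin n → Fin n → WithBot ℝ) (hA' : ∀ i j, A' i j = (A i j : WithBot ℝ))
    (hTr : ∀ m, 1 ≤ m → m ≤ n → ∀ i, bPow A' m i i ≤ 0) :
    ∀ u : Fin n → ℝ,
      ∀ x : Fin n → WithBot ℝ,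
        (∀ i, x i = Finset.univ.sup fun j => bStar A' i j + (u j : WithBot ℝ)) →
        ∀ i, (Finset.univ.sup fun j => A' i j + x j) ≤ x i :=
  stmt11_general A' hTr
end

section
/- Max-plus spectral radius via traces equals the maximum cycle mean: for A : ℝ^{n×n}, λ = max_{1≤m≤n} (1/m)·maxᵢ (Aᵐ)ᵢᵢ equals the maximum over all sequences i₁,…,iₘ of indices (1 ≤ m ≤ n) of the average (a_{i₁i₂} + a_{i₂i₃} + ⋯ + a_{iₘi₁})/m. -/
/-!
Splitting a walk after its first edge writes the weights of walks of length `m + 1` from `i` to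
`j` as the union over `k` of `A i k + (weights of walks of length m from k to j)`. A finite union
of sets with greatest elements has the maximum of those as its greatest element, so induction on
`m` identifies `(Aᵐ)ᵢⱼ` as the heaviest walk weight. Taking the union over the start `i` and the
length `m ≤ n`, after the monotone rescaling by `1 / m`, gives the maximum cycle mean.
-/

open Finset

theorem Finset.isGreatest_biUnion_sup' {ι α : Type*} [LinearOrder α] {s : Finset ι}
    (hs : s.Nonempty) {S : ι → Set α} {f : ι → α} (h : ∀ i ∈ s, IsGreatest (S i) (f i)) :
    IsGreatest (⋃ i ∈ s, S i) (s.sup' hs f) := by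
  obtain ⟨i, hi, hsup⟩ := s.exists_mem_eq_sup' hs f
  refine ⟨Set.mem_biUnion hi (hsup ▸ (h i hi).1), ?_⟩
  simp only [upperBounds, Set.mem_iUnion]
  rintro x ⟨j, hj, hx⟩
  exact ((h j hj).2 hx).trans (le_sup' f hj)

section MaxPlus

variable {n : ℕ} (hn : 0 < n)

theorem isGreatest_iUnion_msup {S : Fin n → Set ℝ} {f : Fin n → ℝ}
    (h : ∀ k, IsGreatest (S k) (f k)) : IsGreatest (⋃ k, S k) (msup hn f) := by
  have := isGreatest_biUnion_sup' ⟨⟨0, hn⟩, mem_univ _⟩ fun k (_ : k ∈ univ) => h k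
  simp only [mem_univ, Set.iUnion_true] at this
  exact this

variable (A : Fin n → Fin n → ℝ)

-- `mpPow hn A 0` is `A`, not the max-plus identity, hence the hypothesis `1 ≤ m`.
lemma mpPow_succ {m : ℕ} (hm : 1 ≤ m) : mpPow hn A (m + 1) = mpMul hn A (mpPow hn A m) := by
  obtain ⟨k, rfl⟩ := Nat.exists_eq_add_of_le' hm
  rfl

def walkWeights (m : ℕ) (i j : Fin n) : Set ℝ :=
  {s | ∃ w : ℕ → Fin n, w 0 = i ∧ w m = j ∧ s = ∑ t ∈ range m, A (w t) (w (t + 1))}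

lemma walkWeights_one (i j : Fin n) : walkWeights A 1 i j = {A i j} := by
  ext s
  constructor
  · rintro ⟨w, rfl, rfl, rfl⟩
    simp
  · rintro rfl
    exact ⟨fun t => if t = 0 then i else j, rfl, rfl, by simp⟩

lemma walkWeights_succ (m : ℕ) (i j : Fin n) :
    walkWeights A (m + 1) i j = ⋃ k, (A i k + ·) '' walkWeights A m k j := by
  ext s
  simp only [Set.mem_iUnion, Set.mem_image]
  constructor
  · rintro ⟨w, rfl, hw, rfl⟩
    refine ⟨w 1, _, ⟨fun t => w (t + 1), rfl, hw, rfl⟩, ?_⟩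
    rw [sum_range_succ']
    ring
  · rintro ⟨k, _, ⟨w, rfl, hw, rfl⟩, rfl⟩
    refine ⟨fun | 0 => i | t + 1 => w t, rfl, hw, ?_⟩
    rw [sum_range_succ']
    ring

theorem isGreatest_walkWeights_mpPow {m : ℕ} (hm : 1 ≤ m) (i j : Fin n) :
    IsGreatest (walkWeights A m i j) (mpPow hn A m i j) := by
  induction m, hm using Nat.le_induction generalizing i with
  | base => exact walkWeights_one A i j ▸ isGreatest_singleton
  | succ m hm ih =>
    rw [walkWeights_succ, mpPow_succ hn A hm]
    exact isGreatest_iUnion_msup hn fun k =>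
      (add_right_strictMono (a := A i k)).map_isGreatest.2 (ih k)

end MaxPlus

theorem stmt15 {n : ℕ} (hn : 0 < n) (A : Fin n → Fin n → ℝ) (lam : ℝ)
    (hlam : lam = (Finset.Icc 1 n).sup' (Finset.nonempty_Icc.mpr hn)
      (fun m => (1 / (m : ℝ)) * msup hn (fun i => mpPow hn A m i i))) :
    (∀ m, 1 ≤ m → ∀ i : Fin n,
        IsGreatest {s : ℝ | ∃ w : ℕ → Fin n, w 0 = i ∧ w m = i ∧
            s = ∑ t ∈ Finset.range m, A (w t) (w (t + 1))}
          (mpPow hn A m i i)) ∧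
      IsGreatest {r : ℝ | ∃ m, 1 ≤ m ∧ m ≤ n ∧ ∃ w : ℕ → Fin n, w m = w 0 ∧
          r = (∑ t ∈ Finset.range m, A (w t) (w (t + 1))) / (m : ℝ)} lam := by
  have closed m (hm : 1 ≤ m) i := isGreatest_walkWeights_mpPow hn A hm i i
  refine ⟨closed, ?_⟩
  have cycleMeans : {r : ℝ | ∃ m, 1 ≤ m ∧ m ≤ n ∧ ∃ w : ℕ → Fin n, w m = w 0 ∧
      r = (∑ t ∈ Finset.range m, A (w t) (w (t + 1))) / (m : ℝ)} =
      ⋃ m ∈ Icc 1 n, (1 / (m : ℝ) * ·) '' ⋃ i, walkWeights A m i i := by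
    ext r
    simp only [walkWeights, Set.mem_ofPred_eq, Set.mem_iUnion, Set.mem_image, mem_Icc]
    constructor
    · rintro ⟨m, hm1, hmn, w, hw, rfl⟩
      exact ⟨m, ⟨hm1, hmn⟩, _, ⟨w 0, w, rfl, hw, rfl⟩, one_div_mul_eq_div _ _⟩
    · rintro ⟨m, ⟨hm1, hmn⟩, _, ⟨i, w, hw0, hwm, rfl⟩, rfl⟩
      exact ⟨m, hm1, hmn, w, hwm.trans hw0.symm, one_div_mul_eq_div _ _⟩
  rw [cycleMeans, hlam]
  refine isGreatest_biUnion_sup' _ fun m hm => ?_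
  have hm1 : 1 ≤ m := (mem_Icc.1 hm).1
  have hscale : StrictMono (1 / (m : ℝ) * ·) :=
    strictMono_mul_left_of_pos (one_div_pos.2 (Nat.cast_pos.2 hm1))
  exact hscale.map_isGreatest.2 (isGreatest_iUnion_msup hn fun i => closed m hm1 i)
end
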